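/- For every n ∈ ℕ and every real u, the identity Σ_{j=0}^n binom(n,j) u^j (1−u)^{n−j} F(j) = Σ_{k=0}^n ((−1)^k/(k+1)) binom(2k,k) binom(n,k) (u/2)^k holds; that is, the expectation of F at a binomial B(n,u) random variable equals the right-hand side. -/

import Mathlib

/-- `F(m) = C(m, ⌊m/2⌋) · 2^{−m}`. -/
noncomputable def F' (m : ℕ) : ℝ := (m.choose (m / 2) : ℝ) / 2 ^ m

/-!
On an interval with `sin a = sin b = 0` the reduction formula for `∫ cos ^ m` has no boundary
terms, so the odd moments of `cos` vanish, `∫ cos ^ (2t) = (b - a) C(2t,t) / 4^t`, and hence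
`∫ cos ^ m (1 + cos) = (b - a) F(m)`. By the binomial theorem, `2π` times the expectation is
`∫_{-π}^{π} (1 + cos x)(1 - u + u cos x)^n dx`. The substitution `x = 2y + π` turns this into
`4 ∫_{-π}^{0} sin² y (1 - 2u cos² y)^n dy`; expanding the power, the moments
`∫ cos^{2k} sin² = (b - a) C(2k,k) / (2 (k+1) 4^k)` give the right-hand side.
-/

open Real Finset

lemma Nat.centralBinom_succ_eq_two_mul_choose (t : ℕ) :
    (t + 1).centralBinom = 2 * (2 * t + 1).choose t := by
  rw [Nat.centralBinom_eq_two_mul_choose, show 2 * (t + 1) = 2 * t + 1 + 1 by ring,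
    Nat.choose_succ_succ, Nat.choose_symm_half]
  ring

lemma F'_two_mul (t : ℕ) : F' (2 * t) = t.centralBinom / 4 ^ t := by
  rw [F', Nat.mul_div_cancel_left t two_pos, pow_mul, Nat.centralBinom_eq_two_mul_choose]
  norm_num

lemma F'_two_mul_add_one (t : ℕ) : F' (2 * t + 1) = (t + 1).centralBinom / 4 ^ (t + 1) := by
  rw [F', show (2 * t + 1) / 2 = t by omega, Nat.centralBinom_succ_eq_two_mul_choose, pow_succ,
    pow_mul]
  push_cast
  ring

section CosMoments

variable {a b : ℝ}

lemma integral_cos_pow_add_two_of_sin_eq_zero (ha : sin a = 0) (hb : sin b = 0) (m : ℕ) :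
    ∫ x in a..b, cos x ^ (m + 2) = (m + 1) / (m + 2) * ∫ x in a..b, cos x ^ m := by
  simp [integral_cos_pow, ha, hb]

lemma integral_cos_pow_two_mul_of_sin_eq_zero (ha : sin a = 0) (hb : sin b = 0) (t : ℕ) :
    ∫ x in a..b, cos x ^ (2 * t) = (b - a) * t.centralBinom / 4 ^ t := by
  induction t with
  | zero => simp
  | succ t ih =>
    have hrec : ((t : ℝ) + 1) * (t + 1).centralBinom = 2 * (2 * t + 1) * t.centralBinom := by
      exact_mod_cast Nat.succ_mul_centralBinom_succ t
    rw [mul_add_one, integral_cos_pow_add_two_of_sin_eq_zero ha hb, ih, pow_succ]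
    push_cast
    field_simp
    linear_combination (-2 * (b - a)) * hrec

lemma integral_cos_pow_two_mul_add_one_of_sin_eq_zero (ha : sin a = 0) (hb : sin b = 0) (t : ℕ) :
    ∫ x in a..b, cos x ^ (2 * t + 1) = 0 := by
  induction t with
  | zero => simp [integral_cos, ha, hb]
  | succ t ih =>
    rw [show 2 * (t + 1) + 1 = 2 * t + 1 + 2 by ring,
      integral_cos_pow_add_two_of_sin_eq_zero ha hb, ih, mul_zero]

lemma integral_cos_pow_mul_one_add_cos_of_sin_eq_zero (ha : sin a = 0) (hb : sin b = 0) (m : ℕ) :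
    ∫ x in a..b, cos x ^ m * (1 + cos x) = (b - a) * F' m := by
  have hsplit : ∫ x in a..b, cos x ^ m * (1 + cos x)
      = (∫ x in a..b, cos x ^ m) + ∫ x in a..b, cos x ^ (m + 1) := by
    rw [← intervalIntegral.integral_add (Continuous.intervalIntegrable (by fun_prop) a b)
      (Continuous.intervalIntegrable (by fun_prop) a b)]
    simp only [pow_succ, mul_one_add]
  obtain ⟨t, rfl | rfl⟩ := Nat.even_or_odd' m
  · rw [hsplit, integral_cos_pow_two_mul_of_sin_eq_zero ha hb,
      integral_cos_pow_two_mul_add_one_of_sin_eq_zero ha hb, F'_two_mul]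
    ring
  · rw [hsplit, show 2 * t + 1 + 1 = 2 * (t + 1) by ring,
      integral_cos_pow_two_mul_of_sin_eq_zero ha hb,
      integral_cos_pow_two_mul_add_one_of_sin_eq_zero ha hb, F'_two_mul_add_one]
    ring

lemma integral_cos_pow_two_mul_mul_sin_sq_of_sin_eq_zero (ha : sin a = 0) (hb : sin b = 0)
    (t : ℕ) :
    ∫ x in a..b, cos x ^ (2 * t) * sin x ^ 2 = (b - a) * t.centralBinom / (2 * (t + 1) * 4 ^ t) := by
  have hrec : ((t : ℝ) + 1) * (t + 1).centralBinom = 2 * (2 * t + 1) * t.centralBinom := by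
    exact_mod_cast Nat.succ_mul_centralBinom_succ t
  have hsplit : ∫ x in a..b, cos x ^ (2 * t) * sin x ^ 2
      = (∫ x in a..b, cos x ^ (2 * t)) - ∫ x in a..b, cos x ^ (2 * (t + 1)) := by
    rw [← intervalIntegral.integral_sub (Continuous.intervalIntegrable (by fun_prop) a b)
      (Continuous.intervalIntegrable (by fun_prop) a b)]
    congr 1 with x
    rw [sin_sq]
    ring
  rw [hsplit, integral_cos_pow_two_mul_of_sin_eq_zero ha hb,
    integral_cos_pow_two_mul_of_sin_eq_zero ha hb, pow_succ]
  field_simp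
  linear_combination (-2 * (b - a)) * hrec

lemma integral_one_add_cos_mul_pow_of_sin_eq_zero (ha : sin a = 0) (hb : sin b = 0) (n : ℕ)
    (u : ℝ) :
    ∫ x in a..b, (1 + cos x) * (1 - u + u * cos x) ^ n
      = (b - a) * ∑ j ∈ range (n + 1), (n.choose j : ℝ) * u ^ j * (1 - u) ^ (n - j) * F' j := by
  have hexpand : ∀ x, (1 + cos x) * (1 - u + u * cos x) ^ n = ∑ j ∈ range (n + 1),
      (n.choose j : ℝ) * u ^ j * (1 - u) ^ (n - j) * (cos x ^ j * (1 + cos x)) := by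
    intro x
    rw [add_comm (1 - u), add_pow, mul_comm, sum_mul]
    refine sum_congr rfl fun j _ => ?_
    ring
  simp_rw [hexpand]
  rw [intervalIntegral.integral_finsetSum
    (fun j _ => Continuous.intervalIntegrable (by fun_prop) a b), mul_sum]
  refine sum_congr rfl fun j _ => ?_
  rw [intervalIntegral.integral_const_mul, integral_cos_pow_mul_one_add_cos_of_sin_eq_zero ha hb]
  ring

lemma integral_sin_sq_mul_one_sub_two_mul_cos_sq_pow_of_sin_eq_zero (ha : sin a = 0)
    (hb : sin b = 0) (n : ℕ) (u : ℝ) :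
    ∫ x in a..b, sin x ^ 2 * (1 - 2 * u * cos x ^ 2) ^ n
      = (b - a) / 2 * ∑ k ∈ range (n + 1),
          (-1) ^ k / (k + 1) * ((2 * k).choose k : ℝ) * (n.choose k : ℝ) * (u / 2) ^ k := by
  have hexpand : ∀ x, sin x ^ 2 * (1 - 2 * u * cos x ^ 2) ^ n = ∑ k ∈ range (n + 1),
      (n.choose k : ℝ) * (-2 * u) ^ k * (cos x ^ (2 * k) * sin x ^ 2) := by
    intro x
    rw [sub_eq_neg_add, add_pow, mul_sum]
    refine sum_congr rfl fun k _ => ?_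
    rw [mul_pow, pow_mul]
    ring
  simp_rw [hexpand]
  rw [intervalIntegral.integral_finsetSum
    (fun k _ => Continuous.intervalIntegrable (by fun_prop) a b), mul_sum]
  refine sum_congr rfl fun k _ => ?_
  rw [intervalIntegral.integral_const_mul,
    integral_cos_pow_two_mul_mul_sin_sq_of_sin_eq_zero ha hb, Nat.centralBinom_eq_two_mul_choose,
    show (-2 * u) ^ k = (-1) ^ k * (u / 2) ^ k * 4 ^ k by rw [← mul_pow, ← mul_pow]; ring_nf]
  field_simp

end CosMoments

lemma integral_comp_cos_eq_two_mul_integral_comp_one_sub_two_mul_cos_sq (g : ℝ → ℝ) :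
    ∫ x in -π..π, g (cos x) = 2 * ∫ y in -π..0, g (1 - 2 * cos y ^ 2) := by
  have hangle : ∀ y, 1 - 2 * cos y ^ 2 = cos (2 * y + π) := by
    intro y
    rw [cos_add_pi, cos_two_mul]
    ring
  simp_rw [hangle]
  rw [intervalIntegral.integral_comp_mul_add (fun x => g (cos x)) two_ne_zero,
    show 2 * -π + π = -π by ring, mul_zero, zero_add, smul_eq_mul]
  field_simp

theorem binomial_expectation_eq_alternating_sum (n : ℕ) (u : ℝ) :
    ∑ j ∈ Finset.range (n + 1), (n.choose j : ℝ) * u ^ j * (1 - u) ^ (n - j) * F' j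
      = ∑ k ∈ Finset.range (n + 1),
          (-1) ^ k / (k + 1) * ((2 * k).choose k : ℝ) * (n.choose k : ℝ) * (u / 2) ^ k := by
  have hhalf : ∀ y, (1 + (1 - 2 * cos y ^ 2)) * (1 - u + u * (1 - 2 * cos y ^ 2)) ^ n
      = 2 * (sin y ^ 2 * (1 - 2 * u * cos y ^ 2) ^ n) := by
    intro y
    rw [sin_sq]
    ring
  have hsub := integral_comp_cos_eq_two_mul_integral_comp_one_sub_two_mul_cos_sq
    (fun c => (1 + c) * (1 - u + u * c) ^ n)
  simp only [hhalf, intervalIntegral.integral_const_mul] at hsub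
  rw [integral_one_add_cos_mul_pow_of_sin_eq_zero (by simp) sin_pi,
    integral_sin_sq_mul_one_sub_two_mul_cos_sq_pow_of_sin_eq_zero (by simp) sin_zero] at hsub
  apply mul_left_cancel₀ pi_ne_zero
  linear_combination hsub / 2
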